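/- For each fixed x ∈ ℝ, the function λ ↦ Ψ±(λ, x) defined on Λ± extends to an analytic function on 𝔻, given by replacing β±, R±, T± in its definition by their analytic continuations via the principal square root; moreover this extension, viewed as a function of (λ, x), is bounded on every compact subset of 𝔻 × ℝ. -/

import Mathlib

open MeasureTheory Real Set Complex

/-- Transverse wavenumber `β(λ)`. -/
noncomputable def beta (k l : ℝ) : ℂ :=
  if -k ^ 2 ≤ l then (Real.sqrt (l + k ^ 2) : ℂ)
  else Complex.I * (Real.sqrt (-l - k ^ 2) : ℂ)

/-- Reflection coefficient. -/
noncomputable def Rcoef (ks ko l : ℝ) : ℂ :=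
  (beta ks l - beta ko l) / (beta ks l + beta ko l)

/-- Transmission coefficient. -/
noncomputable def Tcoef (ks ko l : ℝ) : ℂ :=
  2 * beta ks l / (beta ks l + beta ko l)

/-- Generalized eigenfunction `Ψ⁺(λ, x)`. -/
noncomputable def Psip (km kp l x : ℝ) : ℂ :=
  if 0 < x then
    Complex.exp (-Complex.I * beta kp l * x) + Rcoef kp km l * Complex.exp (Complex.I * beta kp l * x)
  else
    Tcoef kp km l * Complex.exp (-Complex.I * beta km l * x)

/-- Generalized eigenfunction `Ψ⁻(λ, x)`. -/
noncomputable def Psim (km kp l x : ℝ) : ℂ :=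
  if x < 0 then
    Complex.exp (Complex.I * beta km l * x) + Rcoef km kp l * Complex.exp (-Complex.I * beta km l * x)
  else
    Tcoef km kp l * Complex.exp (Complex.I * beta kp l * x)

/-- Principal branch of `λ ↦ √(λ + k²)`. -/
noncomputable def csq (k : ℝ) (z : ℂ) : ℂ := (z + (k : ℂ) ^ 2) ^ ((1 : ℂ) / 2)

/-- The half-line `(-∞, c]` on the real axis, viewed as a subset of `ℂ`. -/
def slit (c : ℝ) : Set ℂ := {z : ℂ | z.im = 0 ∧ z.re ≤ c}

/-- The extension of `Ψ⁺(·, x)` to complex spectral parameter, obtained by replacing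
`β±`, `R⁺`, `T⁺` by their analytic continuations via the principal square root. -/
noncomputable def PsipC (km kp : ℝ) (z : ℂ) (x : ℝ) : ℂ :=
  if 0 < x then
    Complex.exp (-Complex.I * csq kp z * x) +
      ((csq kp z - csq km z) / (csq kp z + csq km z)) * Complex.exp (Complex.I * csq kp z * x)
  else
    (2 * csq kp z / (csq kp z + csq km z)) * Complex.exp (-Complex.I * csq km z * x)

/-- The extension of `Ψ⁻(·, x)` to complex spectral parameter. -/
noncomputable def PsimC (km kp : ℝ) (z : ℂ) (x : ℝ) : ℂ :=
  if x < 0 then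
    Complex.exp (Complex.I * csq km z * x) +
      ((csq km z - csq kp z) / (csq kp z + csq km z)) * Complex.exp (-Complex.I * csq km z * x)
  else
    (2 * csq km z / (csq kp z + csq km z)) * Complex.exp (Complex.I * csq kp z * x)


lemma cpow_half_ofReal (r : ℝ) :
    (r : ℂ) ^ ((1 : ℂ) / 2) =
      if 0 ≤ r then (Real.sqrt r : ℂ) else Complex.I * (Real.sqrt (-r) : ℂ) := by
  have h2 : ((1 : ℂ)/2) = (2⁻¹ : ℂ) := by norm_num
  rw [h2]
  apply Complex.ext
  · rw [Complex.cpow_inv_two_re]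
    by_cases hr : 0 ≤ r
    · simp only [hr, if_true, Complex.ofReal_re, Complex.norm_real, Real.norm_eq_abs,
        _root_.abs_of_nonneg hr]
      rw [add_self_div_two]
    · simp only [hr, if_false, Complex.ofReal_re, Complex.norm_real, Real.norm_eq_abs,
        _root_.abs_of_neg (lt_of_not_ge hr), Complex.mul_re, Complex.I_re, Complex.I_im,
        Complex.ofReal_im]
      simp [Real.sqrt_eq_zero']
  · rw [Complex.cpow_inv_two_im_eq_sqrt (by simp)]
    by_cases hr : 0 ≤ r
    · simp only [hr, if_true, Complex.ofReal_im, Complex.norm_real, Real.norm_eq_abs, Complex.ofReal_re,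
        _root_.abs_of_nonneg hr]
      simp
    · simp only [hr, if_false, Complex.ofReal_im, Complex.norm_real, Real.norm_eq_abs, Complex.ofReal_re,
        _root_.abs_of_neg (lt_of_not_ge hr), Complex.mul_im, Complex.I_re, Complex.I_im]
      rw [show -r - r = -r + -r by ring, add_self_div_two]
      simp

lemma csq_ofReal (k l : ℝ) : csq k (l : ℂ) = beta k l := by
  unfold csq beta
  rw [show ((l : ℂ) + (k : ℂ) ^ 2) = ((l + k ^ 2 : ℝ) : ℂ) by push_cast; ring,
    cpow_half_ofReal]
  by_cases h : -k ^ 2 ≤ l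
  · rw [if_pos (by linarith), if_pos h]
  · rw [if_neg (by intro hh; exact h (by linarith)), if_neg h]
    norm_num
    ring_nf

lemma mem_slitPlane_aux {c k : ℝ} (hk : -c ≤ k ^ 2) {z : ℂ}
    (hz : z ∈ (slit c)ᶜ) : z + (k : ℂ) ^ 2 ∈ Complex.slitPlane := by
  simp only [slit, Set.mem_compl_iff, Set.mem_setOf_eq, not_and, not_le] at hz
  have hre : (z + (k : ℂ) ^ 2).re = z.re + k ^ 2 := by
    simp [Complex.add_re, ← Complex.ofReal_pow]
  have him : (z + (k : ℂ) ^ 2).im = z.im := by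
    simp [Complex.add_im, ← Complex.ofReal_pow]
  rw [Complex.mem_slitPlane_iff]
  by_cases h0 : z.im = 0
  · left; rw [hre]; have := hz h0; linarith
  · right; rw [him]; exact h0

lemma analyticAt_csq (k : ℝ) {z : ℂ} (h : z + (k : ℂ) ^ 2 ∈ Complex.slitPlane) :
    AnalyticAt ℂ (csq k) z := by
  unfold csq
  exact (analyticAt_id.add analyticAt_const).cpow analyticAt_const h

lemma re_csq_pos (k : ℝ) {z : ℂ} (h : z + (k : ℂ) ^ 2 ∈ Complex.slitPlane) :
    0 < (csq k z).re := by
  unfold csq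
  rw [show ((1 : ℂ)/2) = (2⁻¹ : ℂ) by norm_num, Complex.cpow_inv_two_re]
  set w := z + (k : ℂ) ^ 2
  apply Real.sqrt_pos.mpr
  rcases Complex.mem_slitPlane_iff.mp h with h0 | h0
  · have := norm_nonneg w; linarith
  · have h1 : |w.re| < ‖w‖ := Complex.abs_re_lt_norm.mpr h0
    have h2 : -w.re ≤ |w.re| := neg_le_abs _
    linarith

lemma denom_ne {km kp : ℝ} {z : ℂ} (hm : z + (km : ℂ) ^ 2 ∈ Complex.slitPlane)
    (hp : z + (kp : ℂ) ^ 2 ∈ Complex.slitPlane) : csq kp z + csq km z ≠ 0 := by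
  intro h0
  have h1 := re_csq_pos km hm
  have h2 := re_csq_pos kp hp
  have h3 : (csq kp z + csq km z).re = 0 := by rw [h0]; simp
  rw [Complex.add_re] at h3
  linarith

lemma abs_cexp_le (w : ℂ) : ‖Complex.exp w‖ ≤ Real.exp ‖w‖ := by
  rw [Complex.norm_exp]; exact Real.exp_le_exp.mpr (Complex.re_le_norm w)

/-- For each fixed `x ∈ ℝ`, `λ ↦ Ψ±(λ, x)` extends analytically to
`𝔻 = ℂ \ (-∞, -min(k₋², k₊²)]` (the extension being given by the principal square root
continuations), and the extension is bounded on every compact subset of `𝔻 × ℝ`. -/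
theorem generalized_eigenfunctions_analytic_continuation
    (km kp : ℝ) (hkm : 0 < km) (hkp : 0 < kp) :
    (∀ x : ℝ, AnalyticOnNhd ℂ (fun z => PsipC km kp z x) (slit (-(min (km ^ 2) (kp ^ 2))))ᶜ) ∧
    (∀ x : ℝ, AnalyticOnNhd ℂ (fun z => PsimC km kp z x) (slit (-(min (km ^ 2) (kp ^ 2))))ᶜ) ∧
    (∀ l : ℝ, -kp ^ 2 < l → ∀ x : ℝ, PsipC km kp (l : ℂ) x = Psip km kp l x) ∧
    (∀ l : ℝ, -km ^ 2 < l → ∀ x : ℝ, PsimC km kp (l : ℂ) x = Psim km kp l x) ∧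
    (∀ S : Set (ℂ × ℝ), IsCompact S → S ⊆ (slit (-(min (km ^ 2) (kp ^ 2))))ᶜ ×ˢ (Set.univ : Set ℝ) →
      ∃ M : ℝ, ∀ p ∈ S, ‖PsipC km kp p.1 p.2‖ ≤ M ∧
        ‖PsimC km kp p.1 p.2‖ ≤ M) := by
  set c := -(min (km ^ 2) (kp ^ 2)) with hc
  have hkm2 : -c ≤ km ^ 2 := by simp [hc, min_le_left]
  have hkp2 : -c ≤ kp ^ 2 := by simp [hc, min_le_right]
  have hmem : ∀ z ∈ (slit c)ᶜ, z + (km : ℂ) ^ 2 ∈ Complex.slitPlane ∧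
      z + (kp : ℂ) ^ 2 ∈ Complex.slitPlane :=
    fun z hz => ⟨mem_slitPlane_aux hkm2 hz, mem_slitPlane_aux hkp2 hz⟩
  have hAp : ∀ x : ℝ, AnalyticOnNhd ℂ (fun z => PsipC km kp z x) (slit c)ᶜ := by
    intro x z hz
    obtain ⟨hm, hp⟩ := hmem z hz
    have Am := analyticAt_csq km hm
    have Ap := analyticAt_csq kp hp
    have hne := denom_ne hm hp
    by_cases hx : 0 < x
    · simp only [PsipC, if_pos hx]
      exact (((analyticAt_const.mul Ap).mul analyticAt_const).cexp).add
        (((Ap.sub Am).div (Ap.add Am) hne).mul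
          (((analyticAt_const.mul Ap).mul analyticAt_const).cexp))
    · simp only [PsipC, if_neg hx]
      exact ((analyticAt_const.mul Ap).div (Ap.add Am) hne).mul
        (((analyticAt_const.mul Am).mul analyticAt_const).cexp)
  have hAm : ∀ x : ℝ, AnalyticOnNhd ℂ (fun z => PsimC km kp z x) (slit c)ᶜ := by
    intro x z hz
    obtain ⟨hm, hp⟩ := hmem z hz
    have Am := analyticAt_csq km hm
    have Ap := analyticAt_csq kp hp
    have hne := denom_ne hm hp
    by_cases hx : x < 0
    · simp only [PsimC, if_pos hx]
      exact (((analyticAt_const.mul Am).mul analyticAt_const).cexp).add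
        (((Am.sub Ap).div (Ap.add Am) hne).mul
          (((analyticAt_const.mul Am).mul analyticAt_const).cexp))
    · simp only [PsimC, if_neg hx]
      exact ((analyticAt_const.mul Am).div (Ap.add Am) hne).mul
        (((analyticAt_const.mul Ap).mul analyticAt_const).cexp)
  refine ⟨hAp, hAm, ?_, ?_, ?_⟩
  · intro l _ x
    simp only [PsipC, Psip, Rcoef, Tcoef, csq_ofReal]
  · intro l _ x
    simp only [PsimC, Psim, Rcoef, Tcoef, csq_ofReal, add_comm (beta km l) (beta kp l)]
  · intro S hS hSsub
    set G : ℂ × ℝ → ℝ := fun p =>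
      (1 + 2 * (‖csq km p.1‖ + ‖csq kp p.1‖) /
          ‖csq kp p.1 + csq km p.1‖) *
        Real.exp ((‖csq km p.1‖ + ‖csq kp p.1‖) * |p.2|) with hG
    have hGcont : ContinuousOn G S := by
      intro p hp
      have hp1 : p.1 ∈ (slit c)ᶜ := (Set.mem_prod.mp (hSsub hp)).1
      obtain ⟨hm, hpp⟩ := hmem p.1 hp1
      have hA : ContinuousAt (fun q : ℂ × ℝ => ‖csq km q.1‖) p :=
        continuous_norm.continuousAt.comp
          (((analyticAt_csq km hm).continuousAt).comp continuousAt_fst)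
      have hB : ContinuousAt (fun q : ℂ × ℝ => ‖csq kp q.1‖) p :=
        continuous_norm.continuousAt.comp
          (((analyticAt_csq kp hpp).continuousAt).comp continuousAt_fst)
      have hC : ContinuousAt (fun q : ℂ × ℝ => ‖csq kp q.1 + csq km q.1‖) p :=
        continuous_norm.continuousAt.comp
          ((((analyticAt_csq kp hpp).add (analyticAt_csq km hm)).continuousAt).comp
            continuousAt_fst)
      have hCne : ‖csq kp p.1 + csq km p.1‖ ≠ 0 := by
        simpa using denom_ne hm hpp
      have hx : ContinuousAt (fun q : ℂ × ℝ => |q.2|) p :=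
        (_root_.continuous_abs.comp continuous_snd).continuousAt
      exact ((continuousAt_const.add
        ((continuousAt_const.mul (hA.add hB)).div hC hCne)).mul
        (Real.continuous_exp.continuousAt.comp ((hA.add hB).mul hx))).continuousWithinAt
    obtain ⟨M, hM⟩ := hS.exists_bound_of_continuousOn hGcont
    refine ⟨M, fun p hp => ?_⟩
    have hp1 : p.1 ∈ (slit c)ᶜ := (Set.mem_prod.mp (hSsub hp)).1
    obtain ⟨hm, hpp⟩ := hmem p.1 hp1
    set a := csq kp p.1 with ha
    set b := csq km p.1 with hb
    have hne : a + b ≠ 0 := denom_ne hm hpp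
    have hCpos : 0 < ‖a + b‖ := by
      simpa using hne
    set A := ‖b‖ with hA
    set B := ‖a‖ with hB
    have hA0 : 0 ≤ A := norm_nonneg b
    have hB0 : 0 ≤ B := norm_nonneg a
    set E := Real.exp ((A + B) * |p.2|) with hE
    have hE0 : 0 < E := Real.exp_pos _
    set K := 2 * (A + B) / ‖a + b‖ with hK
    have hK0 : 0 ≤ K := by positivity
    have hexp : ∀ u : ℂ, ‖u‖ ≤ A + B →
        ‖Complex.exp (Complex.I * u * (p.2 : ℂ))‖ ≤ E ∧
        ‖Complex.exp (-Complex.I * u * (p.2 : ℂ))‖ ≤ E := by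
      intro u hu
      have h1 : ∀ v : ℂ, ‖v‖ = 1 →
          ‖Complex.exp (v * u * (p.2 : ℂ))‖ ≤ E := by
        intro v hv
        refine (abs_cexp_le _).trans (Real.exp_le_exp.mpr ?_)
        calc ‖v * u * (p.2 : ℂ)‖ = ‖u‖ * |p.2| := by
              rw [norm_mul, norm_mul, hv, one_mul, Complex.norm_real, Real.norm_eq_abs]
          _ ≤ (A + B) * |p.2| := mul_le_mul_of_nonneg_right hu (abs_nonneg _)
      exact ⟨h1 _ Complex.norm_I, h1 _ (by simp)⟩
    have hua : ‖a‖ ≤ A + B := by rw [← hB]; linarith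
    have hub : ‖b‖ ≤ A + B := by rw [← hA]; linarith
    have hcoefR : ∀ u v : ℂ, ‖u‖ ≤ A + B → ‖v‖ ≤ A + B →
        ‖(u - v) / (a + b)‖ ≤ K := by
      intro u v hu hv
      rw [norm_div, hK]
      gcongr
      calc ‖u - v‖ ≤ ‖u‖ + ‖v‖ := by
            exact norm_sub_le u v
        _ ≤ 2 * (A + B) := by linarith
    have hcoefT : ∀ u : ℂ, ‖u‖ ≤ A + B →
        ‖2 * u / (a + b)‖ ≤ K := by
      intro u hu
      rw [norm_div, norm_mul, hK]
      gcongr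
      simpa using hu
    have hbnd1 : ∀ (r w1 w2 : ℂ), ‖r‖ ≤ K →
        ‖Complex.exp w1‖ ≤ E → ‖Complex.exp w2‖ ≤ E →
        ‖Complex.exp w1 + r * Complex.exp w2‖ ≤ (1 + K) * E := by
      intro r w1 w2 hr h1 h2
      calc ‖Complex.exp w1 + r * Complex.exp w2‖
          ≤ ‖Complex.exp w1‖ + ‖r‖ * ‖Complex.exp w2‖ := by
            rw [← norm_mul]; exact norm_add_le _ _
        _ ≤ E + K * E :=
            add_le_add h1 (mul_le_mul hr h2 (norm_nonneg _) hK0)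
        _ = (1 + K) * E := by ring
    have hbnd2 : ∀ (r w : ℂ), ‖r‖ ≤ K →
        ‖Complex.exp w‖ ≤ E →
        ‖r * Complex.exp w‖ ≤ (1 + K) * E := by
      intro r w hr h1
      calc ‖r * Complex.exp w‖
          = ‖r‖ * ‖Complex.exp w‖ := norm_mul _ _
        _ ≤ K * E := mul_le_mul hr h1 (norm_nonneg _) hK0
        _ ≤ (1 + K) * E := by nlinarith
    have hGp : G p = (1 + K) * E := rfl
    have hGM : (1 + K) * E ≤ M := by
      rw [← hGp]
      exact le_trans (le_abs_self _) (by simpa [Real.norm_eq_abs] using hM p hp)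
    constructor
    · refine le_trans ?_ hGM
      rw [PsipC]
      split_ifs with hx
      · exact hbnd1 _ _ _ (hcoefR a b hua hub) (hexp a hua).2 (hexp a hua).1
      · exact hbnd2 _ _ (hcoefT a hua) (hexp b hub).2
    · refine le_trans ?_ hGM
      rw [PsimC]
      split_ifs with hx
      · exact hbnd1 _ _ _ (hcoefR b a hub hua) (hexp b hub).1 (hexp b hub).2
      · exact hbnd2 _ _ (hcoefT b hub) (hexp a hua).1
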